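/- arXiv:1911.04921 — 4 statements merged into one kernel-verified Lean document; each statement's English description precedes it below -/
import Mathlib

section
/- For a poset $P$ with Alexandrov topology, the map $\varphi_P : \|N(P)\| \to P$ sending a point represented uniquely as $(\{p_0 < \dots < p_n\}, t)$ with $t$ in the interior of the standard $n$-simplex to the maximal vertex $p_n$, is continuous. -/
/-- A concrete model for the geometric realization of the nerve (order complex) of a poset `P`:
barycentric coordinate functions `t : P → ℝ` which are nonnegative, finitely supported on a
chain of `P`, and of total sum `1`.  It carries the topology induced from the product topology
on `P → ℝ` (the realization topology is finer, so continuity of maps out of the realization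
follows from continuity for this topology). -/
def NerveReal (P : Type*) [PartialOrder P] : Type _ :=
  {t : P → ℝ // (∀ p, 0 ≤ t p) ∧ (Function.support t).Finite ∧
    IsChain (· ≤ ·) (Function.support t) ∧ ∑ᶠ p, t p = 1}

noncomputable instance (P : Type*) [PartialOrder P] : TopologicalSpace (NerveReal P) := by
  unfold NerveReal; infer_instance

theorem nerveReal_exists_max (P : Type*) [PartialOrder P] (t : NerveReal P) :
    ∃ m ∈ Function.support t.1, ∀ p ∈ Function.support t.1, p ≤ m := by
  obtain ⟨hnn, hfin, hchain, hsum⟩ := t.2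
  have hne : (Function.support t.1).Nonempty := by
    by_contra h
    rw [Set.not_nonempty_iff_eq_empty, Function.support_eq_empty_iff] at h
    rw [h] at hsum
    simp at hsum
  obtain ⟨m, hm, hmax⟩ := Set.Finite.exists_maximalFor id _ hfin hne
  refine ⟨m, hm, fun p hp => ?_⟩
  rcases eq_or_ne p m with h | h
  · exact h.le
  · rcases hchain hm hp (Ne.symm h) with h' | h'
    · exact hmax hp h'
    · exact h'

/-- The map `φ_P : ‖N(P)‖ → P` sending a point, uniquely represented as
`({p₀ < ⋯ < pₙ}, t)` with `t` interior, to the maximal vertex `pₙ` (equivalently, sending a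
barycentric coordinate function to the maximum of its support) is continuous for the
Alexandrov (upper-set) topology on `P`. -/
theorem phiP_continuous (P : Type*) [PartialOrder P] :
    ∃ φ : NerveReal P → P,
      (∀ t : NerveReal P, φ t ∈ Function.support t.1 ∧
        ∀ p ∈ Function.support t.1, p ≤ φ t) ∧
      @Continuous (NerveReal P) P _ (Topology.upperSet P) φ := by
  choose φ hmem hmax using nerveReal_exists_max P
  refine ⟨φ, fun t => ⟨hmem t, hmax t⟩, ?_⟩
  letI : TopologicalSpace P := Topology.upperSet P
  haveI : Topology.IsUpperSet P := ⟨rfl⟩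
  rw [continuous_def]
  intro U hU
  rw [Topology.IsUpperSet.isOpen_iff_isUpperSet] at hU
  have : φ ⁻¹' U = ⋃ p ∈ U, {t : NerveReal P | t.1 p ≠ 0} := by
    ext t
    simp only [Set.mem_preimage, Set.mem_iUnion, Set.mem_setOf_eq]
    constructor
    · intro h
      exact ⟨φ t, h, hmem t⟩
    · rintro ⟨p, hpU, hp⟩
      exact hU (hmax t p hp) hpU
  rw [this]
  refine isOpen_biUnion fun p _ => ?_
  have hc : Continuous fun t : NerveReal P => t.1 p :=
    (continuous_apply p).comp continuous_subtype_val
  exact (isOpen_compl_singleton (x := (0 : ℝ))).preimage hc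
end

section
/- Let $\varphi : \Delta^n \to N(P)$ be a (not necessarily injective) simplicial map from the standard $n$-simplex to the nerve of a poset $P$, and let $\bar\varphi : \Delta^k \to N(P)$ be the inclusion of the image chain $\mathrm{Im}(\varphi)$. Then $\varphi : \Delta^n \to N(P)$ is a retract, in the category of simplicial sets over $N(P)$, of the composite $\Delta^k \times \Delta^n \xrightarrow{pr} \Delta^k \xrightarrow{\bar\varphi} N(P)$; that is, there exist maps $i : \Delta^n \to \Delta^k \times \Delta^n$ and $r : \Delta^k \times \Delta^n \to \Delta^n$ over $N(P)$ with $r \circ i = \mathrm{id}$. -/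
/-- Under the identification of simplicial maps `Δⁿ → N(P)` with monotone
maps `[n] → P` (and of maps `Δᵏ × Δⁿ → N(P)` over `N(P)` with monotone maps out of the product
poset `[k] × [n]`, since `Δᵏ × Δⁿ` is the nerve of `[k] × [n]`): given a (not necessarily
injective) monotone `φ : [n] → P`, with image the strict chain `p : [k] → P`
(`p` strictly monotone with the same range as `φ`), the object `φ : Δⁿ → N(P)` is a retract,
in simplicial sets over `N(P)`, of `Δᵏ × Δⁿ → Δᵏ →(p̄) N(P)`: there are monotone maps
`i : [n] → [k] × [n]` and `r : [k] × [n] → [n]` with `r ∘ i = id`, both compatible with the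
structure maps to `P`. -/
theorem simplex_retract_of_image_chain (P : Type*) [PartialOrder P] (n k : ℕ)
    (φ : Fin (n + 1) → P) (hφ : Monotone φ)
    (p : Fin (k + 1) → P) (hp : StrictMono p) (hrange : Set.range p = Set.range φ) :
    ∃ (i : Fin (n + 1) → Fin (k + 1) × Fin (n + 1))
      (r : Fin (k + 1) × Fin (n + 1) → Fin (n + 1)),
      Monotone i ∧ Monotone r ∧
      (∀ x, r (i x) = x) ∧
      (∀ x, (i x).2 = x) ∧
      -- `i` is a map over `N(P)`
      (∀ x, p (i x).1 = φ x) ∧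
      -- `r` is a map over `N(P)` (the structure map of `Δᵏ × Δⁿ` is `p ∘ pr₁`)
      (∀ y, φ (r y) = p y.1) := by
  classical
  have hmem : ∀ x, φ x ∈ Set.range p := fun x => hrange ▸ Set.mem_range_self x
  choose ψ hψ using hmem
  have hmem' : ∀ j, ∃ y, φ y = p j := by
    intro j
    have : p j ∈ Set.range φ := hrange ▸ Set.mem_range_self j
    exact this
  set F : Fin (k+1) → Finset (Fin (n+1)) :=
    fun j => Finset.univ.filter (fun y => φ y = p j) with hF
  have hFmem : ∀ j y, y ∈ F j ↔ φ y = p j := by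
    intro j y; simp [hF]
  have hFne : ∀ j, (F j).Nonempty := by
    intro j
    obtain ⟨y, hy⟩ := hmem' j
    exact ⟨y, (hFmem j y).2 hy⟩
  set m : Fin (k+1) → Fin (n+1) := fun j => (F j).min' (hFne j) with hm'
  set M : Fin (k+1) → Fin (n+1) := fun j => (F j).max' (hFne j) with hM'
  have hφm : ∀ j, φ (m j) = p j := fun j => (hFmem j _).1 ((F j).min'_mem (hFne j))
  have hφM : ∀ j, φ (M j) = p j := fun j => (hFmem j _).1 ((F j).max'_mem (hFne j))
  have hmM : ∀ j, m j ≤ M j := fun j => (F j).min'_le _ ((F j).max'_mem (hFne j))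
  have cross : ∀ {j j' : Fin (k+1)} {y y' : Fin (n+1)},
      j < j' → φ y = p j → φ y' = p j' → y < y' := by
    intro j j' y y' hjj hy hy'
    by_contra h
    push_neg at h
    have : p j' ≤ p j := by rw [← hy, ← hy']; exact hφ h
    exact absurd this (hp hjj).not_ge
  have hm : Monotone m := by
    intro j j' hjj
    rcases eq_or_lt_of_le hjj with rfl | h
    · exact le_rfl
    · exact (cross h (hφm j) (hφm j')).le
  have hM : Monotone M := by
    intro j j' hjj
    rcases eq_or_lt_of_le hjj with rfl | h
    · exact le_rfl
    · exact (cross h (hφM j) (hφM j')).le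
  refine ⟨fun x => (ψ x, x), fun y => max (m y.1) (min y.2 (M y.1)),
    ?_, ?_, ?_, fun x => rfl, fun x => hψ x, ?_⟩
  · intro x x' hxx
    refine ⟨hp.le_iff_le.mp ?_, hxx⟩
    rw [hψ, hψ]; exact hφ hxx
  · intro y y' h
    exact max_le_max (hm h.1) (min_le_min h.2 (hM h.1))
  · intro x
    have hx : x ∈ F (ψ x) := (hFmem _ x).2 (hψ x).symm
    have h1 : m (ψ x) ≤ x := (F (ψ x)).min'_le _ hx
    have h2 : x ≤ M (ψ x) := (F (ψ x)).le_max' _ hx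
    simp [min_eq_left h2, max_eq_right h1]
  · intro y
    set a := max (m y.1) (min y.2 (M y.1)) with ha
    have h1 : m y.1 ≤ a := le_max_left _ _
    have h2 : a ≤ M y.1 := max_le (hmM y.1) (min_le_right _ _)
    have hl : p y.1 ≤ φ a := by rw [← hφm y.1]; exact hφ h1
    have hr : φ a ≤ p y.1 := by rw [← hφM y.1]; exact hφ h2
    exact le_antisymm hr hl
end

section
/- Let $P$ be a poset and $\Delta^\varphi = \{p_0 < \dots < p_n\}$ a nondegenerate simplex of $N(P)$. The inclusion $\|\Delta^\varphi\|_P \hookrightarrow \varphi_P^{-1}(\{p_0, \dots, p_n\}) \subset \|N(P)\|$ is a filtered homotopy equivalence (a homotopy equivalence through maps and homotopies preserving the filtration over $P$). -/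
section Aux

variable {P : Type*} [PartialOrder P] {n : ℕ}

open Classical

set_option linter.unusedSectionVars false

/-- The mixing map: scale coordinates off `range p` by `s` and renormalize. -/
noncomputable def nrMix (p : Fin (n + 1) → P) (t : P → ℝ) (s : ℝ) : P → ℝ :=
  fun q => (if q ∈ Set.range p then t q else s * t q) / (s + (1 - s) * ∑ i, t (p i))

lemma nrD_pos (p : Fin (n + 1) → P) (t : P → ℝ) (ht0 : ∀ q, 0 ≤ t q) {s : ℝ}
    (hs0 : 0 ≤ s) (hs1 : s ≤ 1) {q0 : P} (hq0 : q0 ∈ Set.range p) (htq0 : t q0 ≠ 0) :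
    0 < s + (1 - s) * ∑ i, t (p i) := by
  have hS : 0 < ∑ i, t (p i) := by
    obtain ⟨i, rfl⟩ := hq0
    exact Finset.sum_pos' (fun j _ => ht0 (p j))
      ⟨i, Finset.mem_univ i, (ht0 (p i)).lt_of_ne (Ne.symm htq0)⟩
  rcases hs0.eq_or_lt with h | h
  · simpa [← h] using hS
  · nlinarith

lemma nr_wsum (p : Fin (n + 1) → P) (hp : Function.Injective p) (t : P → ℝ)
    (hfin : (Function.support t).Finite) (hsum : ∑ᶠ q, t q = 1) (s : ℝ) :
    ∑ᶠ q, (if q ∈ Set.range p then t q else s * t q) = s + (1 - s) * ∑ i, t (p i) := by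
  have heq : (fun q => if q ∈ Set.range p then t q else s * t q)
      = (fun q => s * t q) + Set.indicator (Set.range p) (fun q => (1 - s) * t q) := by
    funext q
    by_cases h : q ∈ Set.range p <;> simp [Set.indicator, h] <;> ring
  have h1 : (Function.support fun q => s * t q).Finite :=
    hfin.subset (by intro q hq; simp only [Function.mem_support] at hq ⊢; intro h; simp [h] at hq)
  have h2 : (Function.support (Set.indicator (Set.range p) fun q => (1 - s) * t q)).Finite := by
    refine hfin.subset ?_
    intro q hq
    simp only [Function.mem_support, Set.indicator] at hq ⊢
    intro h; simp [h] at hq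
  rw [heq]
  rw [show ((fun q => s * t q) + Set.indicator (Set.range p) fun q => (1 - s) * t q)
      = fun q => (fun q => s * t q) q + (Set.indicator (Set.range p) fun q => (1 - s) * t q) q
      from rfl]
  rw [finsum_add_distrib h1 h2, ← mul_finsum t s, hsum, ← finsum_mem_def,
    finsum_mem_range hp, finsum_eq_sum_of_fintype, ← Finset.mul_sum]
  ring

lemma nrMix_mem (p : Fin (n + 1) → P) (hp : Function.Injective p) (t : P → ℝ)
    (ht : (∀ q, 0 ≤ t q) ∧ (Function.support t).Finite ∧
      IsChain (· ≤ ·) (Function.support t) ∧ ∑ᶠ q, t q = 1)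
    {s : ℝ} (hs0 : 0 ≤ s) (hs1 : s ≤ 1) {q0 : P} (hq0 : q0 ∈ Set.range p)
    (htq0 : t q0 ≠ 0) :
    (∀ q, 0 ≤ nrMix p t s q) ∧ (Function.support (nrMix p t s)).Finite ∧
      IsChain (· ≤ ·) (Function.support (nrMix p t s)) ∧ ∑ᶠ q, nrMix p t s q = 1 := by
  obtain ⟨ht0, hfin, hch, hsum⟩ := ht
  have hD := nrD_pos p t ht0 hs0 hs1 hq0 htq0
  have hsupp : Function.support (nrMix p t s) ⊆ Function.support t := by
    intro q hq
    simp only [Function.mem_support, nrMix] at hq ⊢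
    intro h
    apply hq
    by_cases hr : q ∈ Set.range p <;> simp [hr, h]
  refine ⟨fun q => ?_, hfin.subset hsupp, hch.mono hsupp, ?_⟩
  · apply div_nonneg _ hD.le
    by_cases hr : q ∈ Set.range p <;> simp [hr, ht0 q, mul_nonneg hs0 (ht0 q)]
  · have hthis : ∀ q, nrMix p t s q
        = (if q ∈ Set.range p then t q else s * t q) * (s + (1 - s) * ∑ i, t (p i))⁻¹ :=
      fun q => div_eq_mul_inv _ _
    have hsupp' : (Function.support fun q => if q ∈ Set.range p then t q else s * t q).Finite := by
      refine hfin.subset ?_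
      intro q hq
      simp only [Function.mem_support] at hq ⊢
      intro h
      apply hq; by_cases hr : q ∈ Set.range p <;> simp [hr, h]
    calc ∑ᶠ q, nrMix p t s q
        = (∑ᶠ q, (if q ∈ Set.range p then t q else s * t q))
            * (s + (1 - s) * ∑ i, t (p i))⁻¹ := by
          rw [finsum_mul _ _]; exact finsum_congr hthis
      _ = 1 := by rw [nr_wsum p hp t hfin hsum s]; exact mul_inv_cancel₀ hD.ne'

lemma nrMix_supp_of_q0 (p : Fin (n + 1) → P) (t : P → ℝ) {s : ℝ}
    (hD : 0 < s + (1 - s) * ∑ i, t (p i))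
    {q0 : P} (hq0 : q0 ∈ Set.range p) (htq0 : t q0 ≠ 0) :
    nrMix p t s q0 ≠ 0 := by
  simp only [nrMix, hq0, if_pos]
  exact div_ne_zero htq0 hD.ne'

lemma nrMix_supp_subset (p : Fin (n + 1) → P) (t : P → ℝ) (s : ℝ) :
    Function.support (nrMix p t s) ⊆ Function.support t := by
  intro q hq
  simp only [Function.mem_support, nrMix] at hq ⊢
  intro h
  apply hq
  by_cases hr : q ∈ Set.range p <;> simp [hr, h]

lemma nrMix_continuous {X : Type*} [TopologicalSpace X] (p : Fin (n + 1) → P)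
    (f : X → (P → ℝ)) (σ : X → ℝ) (hf : Continuous f) (hσ : Continuous σ)
    (hD : ∀ x, σ x + (1 - σ x) * ∑ i, f x (p i) ≠ 0) :
    Continuous (fun x => nrMix p (f x) (σ x)) := by
  apply continuous_pi
  intro q
  simp only [nrMix]
  have hnum : Continuous fun x => if q ∈ Set.range p then f x q else σ x * f x q := by
    by_cases hq : q ∈ Set.range p
    · simp [hq]; exact (continuous_apply q).comp hf
    · simp [hq]; exact hσ.mul ((continuous_apply q).comp hf)
  have hden : Continuous fun x => σ x + (1 - σ x) * ∑ i, f x (p i) :=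
    hσ.add ((continuous_const.sub hσ).mul
      (continuous_finset_sum _ fun i _ => (continuous_apply (p i)).comp hf))
  exact hnum.div hden hD

end Aux

/-- Let `Δ^φ = {p₀ < ⋯ < pₙ}` be a nondegenerate simplex of `N(P)`, realized
inside `‖N(P)‖` as the set `A` of points supported on the chain `{p₀,…,pₙ}`, and let
`B = φ_P⁻¹({p₀,…,pₙ})` where `φ_P` takes the maximal vertex of the support.  Then the
inclusion `A ⊆ B` is a filtered homotopy equivalence: there is a filtered continuous
retraction `r : B → A` with `r ∘ incl = id`, and a filtered homotopy from `incl ∘ r` to the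
identity of `B`. -/
theorem simplex_into_preimage_filtered_htpy_equiv (P : Type*) [PartialOrder P]
    (φP : NerveReal P → P)
    (hφP : ∀ t : NerveReal P, φP t ∈ Function.support t.1 ∧
      ∀ q ∈ Function.support t.1, q ≤ φP t)
    (n : ℕ) (p : Fin (n + 1) → P) (hp : StrictMono p) :
    ∃ hAB : {t : NerveReal P | Function.support t.1 ⊆ Set.range p} ⊆
        {t : NerveReal P | φP t ∈ Set.range p},
      ∃ r : {t : NerveReal P | φP t ∈ Set.range p} →
          {t : NerveReal P | Function.support t.1 ⊆ Set.range p},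
        Continuous r ∧
        (∀ b, φP ((r b) : NerveReal P) = φP (b : NerveReal P)) ∧
        (∀ a, r (Set.inclusion hAB a) = a) ∧
        ∃ H : {t : NerveReal P | φP t ∈ Set.range p} × unitInterval →
            {t : NerveReal P | φP t ∈ Set.range p},
          Continuous H ∧
          (∀ z, φP ((H z) : NerveReal P) = φP (z.1 : NerveReal P)) ∧
          (∀ b, H (b, 0) = Set.inclusion hAB (r b)) ∧
          (∀ b, H (b, 1) = b) := by
  classical
  have hinj := hp.injective
  have hAB : {t : NerveReal P | Function.support t.1 ⊆ Set.range p} ⊆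
      {t : NerveReal P | φP t ∈ Set.range p} := fun t ht => ht (hφP t).1
  refine ⟨hAB, ?_⟩
  have hmemm : ∀ (b : NerveReal P), φP b ∈ Set.range p → ∀ s : ℝ, 0 ≤ s → s ≤ 1 →
      (∀ q, 0 ≤ nrMix p b.1 s q) ∧ (Function.support (nrMix p b.1 s)).Finite ∧
      IsChain (· ≤ ·) (Function.support (nrMix p b.1 s)) ∧ ∑ᶠ q, nrMix p b.1 s q = 1 :=
    fun b hb s hs0 hs1 => nrMix_mem p hinj b.1 b.2 hs0 hs1 hb (hφP b).1
  let mk : ∀ (b : NerveReal P), φP b ∈ Set.range p → ∀ s : ℝ, 0 ≤ s → s ≤ 1 → NerveReal P :=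
    fun b hb s hs0 hs1 => ⟨nrMix p b.1 s, hmemm b hb s hs0 hs1⟩
  have hφmk : ∀ b hb s hs0 hs1, φP (mk b hb s hs0 hs1) = φP b := by
    intro b hb s hs0 hs1
    have hD := nrD_pos p b.1 b.2.1 hs0 hs1 hb (hφP b).1
    have h1 : φP b ∈ Function.support (mk b hb s hs0 hs1).1 :=
      nrMix_supp_of_q0 p b.1 hD hb (hφP b).1
    have h2 := nrMix_supp_subset p b.1 s
    exact le_antisymm ((hφP b).2 _ (h2 (hφP (mk b hb s hs0 hs1)).1)) ((hφP _).2 _ h1)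
  have hr0 : ∀ (b : NerveReal P) (hb : φP b ∈ Set.range p),
      Function.support (mk b hb 0 le_rfl zero_le_one).1 ⊆ Set.range p := by
    intro b hb q hq
    by_contra hrq
    simp [mk, nrMix, hrq] at hq
  have hDne : ∀ (b : NerveReal P), φP b ∈ Set.range p → ∀ s : ℝ, 0 ≤ s → s ≤ 1 →
      s + (1 - s) * ∑ i, b.1 (p i) ≠ 0 :=
    fun b hb s hs0 hs1 => (nrD_pos p b.1 b.2.1 hs0 hs1 hb (hφP b).1).ne'
  have hval : Continuous fun b : {t : NerveReal P | φP t ∈ Set.range p} => (b.1.1 : P → ℝ) :=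
    (continuous_subtype_val :
      Continuous (Subtype.val : NerveReal P → (P → ℝ))).comp continuous_subtype_val
  refine ⟨fun b => ⟨mk b.1 b.2 0 le_rfl zero_le_one, hr0 b.1 b.2⟩, ?_, ?_, ?_, ?_⟩
  · apply Continuous.subtype_mk
    apply Continuous.subtype_mk
    exact nrMix_continuous p _ (fun _ => (0 : ℝ)) hval continuous_const
      (fun b => hDne b.1 b.2 0 le_rfl zero_le_one)
  · intro b
    exact hφmk b.1 b.2 0 le_rfl zero_le_one
  · intro a
    apply Subtype.ext
    apply Subtype.ext
    funext q
    show nrMix p a.1.1 0 q = a.1.1 q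
    have hS : ∑ i, a.1.1 (p i) = 1 := by
      have h1 : Set.indicator (Set.range p) a.1.1 = a.1.1 := Set.indicator_eq_self.mpr a.2
      calc ∑ i, a.1.1 (p i) = ∑ᶠ i, a.1.1 (p i) := (finsum_eq_sum_of_fintype _).symm
        _ = ∑ᶠ q ∈ Set.range p, a.1.1 q := (finsum_mem_range hinj).symm
        _ = ∑ᶠ q, Set.indicator (Set.range p) a.1.1 q := finsum_mem_def _ _
        _ = 1 := by rw [h1]; exact a.1.2.2.2.2
    by_cases hq : q ∈ Set.range p
    · simp [nrMix, hq, hS]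
    · have h0 : a.1.1 q = 0 := by
        by_contra h; exact hq (a.2 h)
      simp [nrMix, hq, h0]
  · have hBmem : ∀ z : {t : NerveReal P | φP t ∈ Set.range p} × unitInterval,
        φP (mk z.1.1 z.1.2 (z.2 : ℝ) (unitInterval.nonneg z.2) (unitInterval.le_one z.2)) ∈ Set.range p := by
      intro z
      rw [hφmk z.1.1 z.1.2 (z.2 : ℝ) (unitInterval.nonneg z.2) (unitInterval.le_one z.2)]
      exact z.1.2
    refine ⟨fun z => ⟨mk z.1.1 z.1.2 (z.2 : ℝ) (unitInterval.nonneg z.2) (unitInterval.le_one z.2), hBmem z⟩, ?_, ?_, ?_, ?_⟩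
    · apply Continuous.subtype_mk
      apply Continuous.subtype_mk
      exact nrMix_continuous p _ (fun z : {t : NerveReal P | φP t ∈ Set.range p} × unitInterval => (z.2.1 : ℝ))
        (hval.comp continuous_fst) (continuous_subtype_val.comp continuous_snd)
        (fun z : {t : NerveReal P | φP t ∈ Set.range p} × unitInterval => hDne z.1.1 z.1.2 (z.2 : ℝ) (unitInterval.nonneg z.2) (unitInterval.le_one z.2))
    · intro z
      exact hφmk z.1.1 z.1.2 (z.2 : ℝ) (unitInterval.nonneg z.2) (unitInterval.le_one z.2)
    · intro b
      apply Subtype.ext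
      apply Subtype.ext
      show nrMix p b.1.1 ((0 : unitInterval) : ℝ) = nrMix p b.1.1 0
      norm_num
    · intro b
      apply Subtype.ext
      apply Subtype.ext
      funext q
      show nrMix p b.1.1 ((1 : unitInterval) : ℝ) q = b.1.1 q
      by_cases hq : q ∈ Set.range p <;> simp [nrMix, hq]
end

section
/- Let $F : R(P)^{op} \to \mathrm{sSet}$ be a diagram such that for every inclusion of nondegenerate simplices $\Delta^\varphi \subseteq \Delta^\psi$ of $N(P)$, the map $F(\Delta^\psi) \to F(\Delta^\varphi)$ is a monomorphism. Then the category $\mathcal{C}$ (with objects pairs $(\Delta^\varphi, \Delta^\psi)$, $\Delta^\psi \subseteq \Delta^\varphi$, ordered by $(\Delta^\varphi,\Delta^\psi) \le (\Delta^{\varphi'},\Delta^{\psi'})$ iff $\Delta^{\varphi} \subseteq \Delta^{\varphi'}$ and $\Delta^{\psi'} \subseteq \Delta^{\psi}$, with appropriate variance) is almost filtered with respect to the Set-valued functor of simplices of $F \otimes R(P) : (\Delta^\varphi, \Delta^\psi) \mapsto F(\Delta^\varphi) \times \Delta^\psi$ over $N(P)$. -/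
open CategoryTheory Opposite

/-- Nonempty finite chains in `P`: the nondegenerate simplices of the nerve `N(P)`,
i.e. the objects of `R(P)`. -/
def PChain (P : Type) [PartialOrder P] : Type :=
  {s : Finset P // s.Nonempty ∧ IsChain (· ≤ ·) (s : Set P)}

/-- Objects of the category `𝒞 ⊆ R(P)ᵒᵖ × R(P)`: pairs `(Δ^φ, Δ^ψ)` with `Δ^ψ ⊆ Δ^φ`. -/
def CObj (P : Type) [PartialOrder P] : Type :=
  {q : PChain P × PChain P // q.2.1 ⊆ q.1.1}

/-- The order on `𝒞`: there is a morphism `(Δ^φ,Δ^ψ) ⟶ (Δ^φ',Δ^ψ')` iff `Δ^φ' ⊆ Δ^φ`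
(first coordinate contravariant, in `R(P)ᵒᵖ`) and `Δ^ψ ⊆ Δ^ψ'`. -/
def CLe {P : Type} [PartialOrder P] (x y : CObj P) : Prop :=
  y.1.1.1 ⊆ x.1.1.1 ∧ x.1.2.1 ⊆ y.1.2.1

/-- The set of simplices of `(F ⊗ R(P))(Δ^φ, Δ^ψ) = F(Δ^φ) × Δ^ψ`: pairs `(σ^F, σ^P)` of an
`m`-simplex of `F(Δ^φ)` and an `m`-simplex of `Δ^ψ` (a monotone map `[m] → P` with values in
the chain `Δ^ψ`), for some `m`. -/
def GSimp {P : Type} [PartialOrder P] (F : PChain P → SSet.{0}) (d : CObj P) : Type :=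
  Σ m : ℕ, (F d.1.1).obj (op (SimplexCategory.mk m)) ×
    {f : Fin (m + 1) → P // Monotone f ∧ ∀ i, f i ∈ d.1.2.1}

/-- The action of `F ⊗ R(P)` on morphisms of `𝒞`, on sets of simplices. -/
def GSimpMap {P : Type} [PartialOrder P] (F : PChain P → SSet.{0})
    (Fres : ∀ {a b : PChain P}, a.1 ⊆ b.1 → (F b ⟶ F a))
    {x y : CObj P} (h : CLe x y) : GSimp F x → GSimp F y :=
  fun s => ⟨s.1, ((Fres h.1).app _ s.2.1,
    ⟨s.2.2.1, s.2.2.2.1, fun i => h.2 (s.2.2.2.2 i)⟩)⟩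

/-- Injectivity of the constructor of `GSimp` (same dimension). -/
lemma gsimp_inj {P : Type} [PartialOrder P] {F : PChain P → SSet.{0}} {dd : CObj P} {m : ℕ}
    {a b : (F dd.1.1).obj (op (SimplexCategory.mk m))}
    {fa fb : {f : Fin (m + 1) → P // Monotone f ∧ ∀ i, f i ∈ dd.1.2.1}}
    (h : (⟨m, (a, fa)⟩ : GSimp F dd) = ⟨m, (b, fb)⟩) : a = b ∧ fa = fb := by
  have h2 : (a, fa) = (b, fb) := by
    have h2 := (Sigma.mk.inj_iff.mp h).2
    exact eq_of_heq h2
  exact ⟨congrArg Prod.fst h2, congrArg Prod.snd h2⟩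

/-- First components of equal `GSimp`s agree. -/
lemma gsimp_fst {P : Type} [PartialOrder P] {F : PChain P → SSet.{0}} {dd : CObj P}
    (s t : GSimp F dd) (h : s = t) : s.1 = t.1 := by cases h; rfl

/-- Congruence in the simplex component. -/
lemma gsimp_congr {P : Type} [PartialOrder P] {F : PChain P → SSet.{0}} {dd : CObj P} {m : ℕ}
    {a b : (F dd.1.1).obj (op (SimplexCategory.mk m))}
    {f : Fin (m + 1) → P} {pa pb : Monotone f ∧ ∀ i, f i ∈ dd.1.2.1}
    (h : a = b) : (⟨m, (a, ⟨f, pa⟩)⟩ : GSimp F dd) = ⟨m, (b, ⟨f, pb⟩)⟩ := by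
  cases h; rfl

/-- Replacing the underlying map of the chain component by an equal one. -/
lemma gsimp_refit {P : Type} [PartialOrder P] {F : PChain P → SSet.{0}} {dd : CObj P} {m : ℕ}
    {σ : (F dd.1.1).obj (op (SimplexCategory.mk m))}
    {g f : Fin (m + 1) → P} (hg : Monotone g) (hgm : ∀ i, g i ∈ dd.1.2.1)
    (hgf : g = f) (hf : Monotone f) :
    (⟨m, (σ, ⟨g, hg, hgm⟩)⟩ : GSimp F dd) = ⟨m, (σ, ⟨f, hf, hgf ▸ hgm⟩)⟩ := by
  subst hgf; rfl

/-- Lemma A.5.  Let `F : R(P)ᵒᵖ → sSet` be a diagram whose restriction maps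
`F(Δ^ψ) → F(Δ^φ)` (for `Δ^φ ⊆ Δ^ψ`) are monomorphisms.  Then the category `𝒞` is almost
filtered with respect to the Set-valued functor of simplices of `F ⊗ R(P)`: condition (1),
every short compatible zigzag admits a mediating object, and condition (2), every longer
compatible zigzag from `d` to itself factors through a shorter zigzag `d ← d₁' → e ← d₂' → d`
realizing the same identification. -/
theorem C_almost_filtered (P : Type) [PartialOrder P]
    (F : PChain P → SSet.{0})
    (Fres : ∀ {a b : PChain P}, a.1 ⊆ b.1 → (F b ⟶ F a))
    (hFid : ∀ a : PChain P, Fres (subset_refl a.1) = 𝟙 (F a))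
    (hFcomp : ∀ {a b c : PChain P} (h : a.1 ⊆ b.1) (h' : b.1 ⊆ c.1),
      Fres (h.trans h') = Fres h' ≫ Fres h)
    (hmono : ∀ {a b : PChain P} (h : a.1 ⊆ b.1) (m : SimplexCategoryᵒᵖ),
      Function.Injective ((Fres h).app m)) :
    -- condition (1)
    (∀ (d d1 d2 d3 : CObj P) (h1 : CLe d1 d) (h12 : CLe d1 d2) (h32 : CLe d3 d2)
      (_ : CLe d3 d) (x1 : GSimp F d1) (x3 : GSimp F d3),
      GSimpMap F @Fres h12 x1 = GSimpMap F @Fres h32 x3 →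
      ∃ e : CObj P, CLe d1 e ∧ CLe d3 e ∧ CLe e d2) ∧
    -- condition (2)
    (∀ (n : ℕ), 2 ≤ n → ∀ (d : ℕ → CObj P)
      (hodd : ∀ k ≤ n, CLe (d (2 * k + 1)) (d (2 * k)) ∧ CLe (d (2 * k + 1)) (d (2 * k + 2))),
      d (2 * n + 2) = d 0 → ∀ (x : ∀ i, GSimp F (d i)),
      (∀ k (hk : k ≤ n), GSimpMap F @Fres (hodd k hk).1 (x (2 * k + 1)) = x (2 * k) ∧
        GSimpMap F @Fres (hodd k hk).2 (x (2 * k + 1)) = x (2 * k + 2)) →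
      ∃ (e d1' d2' : CObj P) (h1 : CLe d1' (d 0)) (h1e : CLe d1' e) (h2e : CLe d2' e)
        (h2 : CLe d2' (d (2 * n + 2))) (x1' : GSimp F d1') (x2' : GSimp F d2'),
        GSimpMap F @Fres h1 x1' = x 0 ∧ GSimpMap F @Fres h2 x2' = x (2 * n + 2) ∧
        GSimpMap F @Fres h1e x1' = GSimpMap F @Fres h2e x2') := by
  classical
  constructor
  · -- condition (1)
    rintro d d1 d2 d3 h1d h12 h32 h3d x1 x3 -
    obtain ⟨p, hp⟩ := d2.1.1.2.1
    refine ⟨⟨(⟨d1.1.1.1 ∩ d3.1.1.1,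
        ⟨p, Finset.mem_inter.mpr ⟨h12.1 hp, h32.1 hp⟩⟩,
        d1.1.1.2.2.mono (Finset.coe_subset.mpr Finset.inter_subset_left)⟩,
        ⟨d1.1.2.1 ∪ d3.1.2.1,
        d1.1.2.2.1.mono Finset.subset_union_left,
        d2.1.2.2.2.mono (Finset.coe_subset.mpr (Finset.union_subset h12.2 h32.2))⟩),
        ?_⟩, ⟨Finset.inter_subset_left, Finset.subset_union_left⟩,
        ⟨Finset.inter_subset_right, Finset.subset_union_right⟩,
        ⟨Finset.subset_inter h12.1 h32.1, Finset.union_subset h12.2 h32.2⟩⟩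
    exact Finset.union_subset
      (Finset.subset_inter d1.2 ((h12.2.trans d2.2).trans h32.1))
      (Finset.subset_inter ((h32.2.trans d2.2).trans h12.1) d3.2)
  · -- condition (2)
    rintro n hn d hodd hd x hcomp
    rcases hx1 : x 1 with ⟨m, σ1, fm, hfm, hm1⟩
    -- all simplices in the zigzag have the same dimension and chain component
    have claimOdd : ∀ k, ∀ hk : k ≤ n, ∃ (σ : (F (d (2 * k + 1)).1.1).obj
        (op (SimplexCategory.mk m))) (hm : ∀ i, fm i ∈ (d (2 * k + 1)).1.2.1),
        x (2 * k + 1) = ⟨m, (σ, ⟨fm, hfm, hm⟩)⟩ := by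
      intro k
      induction k with
      | zero => exact fun _ => ⟨σ1, hm1, hx1⟩
      | succ k ih =>
        intro hk
        have hk' : k ≤ n := by omega
        obtain ⟨σ, hm, hx⟩ := ih hk'
        have h2 := (hcomp k hk').2
        rw [hx] at h2
        have h2' : GSimpMap F @Fres (hodd k hk').2 ⟨m, (σ, ⟨fm, hfm, hm⟩)⟩
            = x (2 * (k + 1)) := h2
        have h3 := (hcomp (k + 1) hk).1
        have h4 := h3.trans h2'.symm
        rcases hy : x (2 * (k + 1) + 1) with ⟨m', τ, g, hg, hgm⟩
        rw [hy] at h4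
        have hm' : m' = m := gsimp_fst _ _ h4
        subst hm'
        obtain ⟨-, hfab⟩ := gsimp_inj h4
        have hgfm : g = fm := congrArg Subtype.val hfab
        exact ⟨τ, hgfm ▸ hgm, gsimp_refit hg hgm hgfm hfm⟩
    choose σo hmo hxo using claimOdd
    have claimEven : ∀ k, ∀ hk : k ≤ n + 1, ∃ (σ : (F (d (2 * k)).1.1).obj
        (op (SimplexCategory.mk m))) (hm : ∀ i, fm i ∈ (d (2 * k)).1.2.1),
        x (2 * k) = ⟨m, (σ, ⟨fm, hfm, hm⟩)⟩ := by
      intro k hk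
      rcases Nat.lt_or_ge k (n + 1) with hlt | hge
      · have hk' : k ≤ n := by omega
        have h2 := (hcomp k hk').1
        rw [hxo k hk'] at h2
        exact ⟨_, fun i => (hodd k hk').1.2 (hmo k hk' i), h2.symm⟩
      · have he : k = n + 1 := by omega
        subst he
        have h2 := (hcomp n le_rfl).2
        rw [hxo n le_rfl] at h2
        exact ⟨_, fun i => (hodd n le_rfl).2.2 (hmo n le_rfl i), h2.symm⟩
    choose σe hme hxe using claimEven
    -- the restriction relations
    have rel1 : ∀ k, ∀ hk : k ≤ n,
        (Fres (hodd k hk).1.1).app (op (SimplexCategory.mk m)) (σo k hk)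
          = σe k (hk.trans (Nat.le_succ n)) := by
      intro k hk
      have h := (hcomp k hk).1
      rw [hxo k hk] at h
      exact (gsimp_inj (h.trans (hxe k (hk.trans (Nat.le_succ n))))).1
    have rel2 : ∀ k, ∀ hk : k ≤ n,
        (Fres (hodd k hk).2.1).app (op (SimplexCategory.mk m)) (σo k hk)
          = σe (k + 1) (Nat.add_le_add_right hk 1) := by
      intro k hk
      have h := (hcomp k hk).2
      rw [hxo k hk] at h
      have hx2 : x (2 * k + 2) = ⟨m, (σe (k + 1) (Nat.add_le_add_right hk 1),
          ⟨fm, hfm, hme (k + 1) (Nat.add_le_add_right hk 1)⟩)⟩ :=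
        hxe (k + 1) (Nat.add_le_add_right hk 1)
      exact (gsimp_inj (h.trans hx2)).1
    -- the common chain `S = image fm`
    set S : Finset P := Finset.image fm Finset.univ with hS
    have hmemS : ∀ i, fm i ∈ S := fun i => Finset.mem_image_of_mem fm (Finset.mem_univ i)
    have hSne : S.Nonempty := ⟨fm 0, hmemS 0⟩
    have hSchain : IsChain (· ≤ ·) (S : Set P) := by
      rintro a ha b hb hab
      simp only [hS, Finset.coe_image, Set.mem_image] at ha hb
      obtain ⟨i, -, rfl⟩ := ha
      obtain ⟨j, -, rfl⟩ := hb
      rcases le_total i j with h | h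
      · exact Or.inl (hfm h)
      · exact Or.inr (hfm h)
    set Sc : PChain P := ⟨S, hSne, hSchain⟩ with hSc
    have hsubO : ∀ k, ∀ hk : k ≤ n, S ⊆ (d (2 * k + 1)).1.1.1 := by
      intro k hk p hp
      obtain ⟨i, -, rfl⟩ := Finset.mem_image.mp hp
      exact (d (2 * k + 1)).2 (hmo k hk i)
    have hsubE : ∀ k, ∀ hk : k ≤ n + 1, S ⊆ (d (2 * k)).1.1.1 := by
      intro k hk p hp
      obtain ⟨i, -, rfl⟩ := Finset.mem_image.mp hp
      exact (d (2 * k)).2 (hme k hk i)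
    -- the main computation: restrictions of the odd simplices to `Sc` agree
    have main : ∀ k, ∀ hk : k ≤ n,
        (Fres (a := Sc) (hsubO 0 (Nat.zero_le n))).app (op (SimplexCategory.mk m)) (σo 0 (Nat.zero_le n))
          = (Fres (a := Sc) (hsubO k hk)).app (op (SimplexCategory.mk m)) (σo k hk) := by
      intro k
      induction k with
      | zero => intro _; rfl
      | succ k ih =>
        intro hk
        have hk' : k ≤ n := by omega
        have hA : S ⊆ (d (2 * k + 2)).1.1.1 := hsubE (k + 1) (Nat.add_le_add_right hk' 1)
        refine (ih hk').trans ?_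
        calc (Fres (a := Sc) (hsubO k hk')).app (op (SimplexCategory.mk m)) (σo k hk')
            = (Fres (a := Sc) hA).app (op (SimplexCategory.mk m))
              ((Fres (hodd k hk').2.1).app (op (SimplexCategory.mk m)) (σo k hk')) :=
              congrArg (fun (g : F ((d (2 * k + 1)).1.1) ⟶ F Sc) =>
                  g.app (op (SimplexCategory.mk m)) (σo k hk'))
                (hFcomp hA (hodd k hk').2.1)
          _ = (Fres (a := Sc) hA).app (op (SimplexCategory.mk m))
              (σe (k + 1) (Nat.add_le_add_right hk' 1)) :=
              congrArg ((Fres (a := Sc) hA).app (op (SimplexCategory.mk m))) (rel2 k hk')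
          _ = (Fres (a := Sc) hA).app (op (SimplexCategory.mk m))
              ((Fres (hodd (k + 1) hk).1.1).app (op (SimplexCategory.mk m)) (σo (k + 1) hk)) :=
              congrArg ((Fres (a := Sc) hA).app (op (SimplexCategory.mk m))) (rel1 (k + 1) hk).symm
          _ = (Fres (a := Sc) (hsubO (k + 1) hk)).app (op (SimplexCategory.mk m)) (σo (k + 1) hk) :=
              (congrArg (fun (g : F ((d (2 * (k + 1) + 1)).1.1) ⟶ F Sc) =>
                  g.app (op (SimplexCategory.mk m)) (σo (k + 1) hk))
                (hFcomp hA (hodd (k + 1) hk).1.1)).symm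
    -- assemble the answer
    refine ⟨⟨(Sc, Sc), subset_rfl⟩,
      ⟨((d 1).1.1, Sc), hsubO 0 (Nat.zero_le n)⟩,
      ⟨((d (2 * n + 1)).1.1, Sc), hsubO n le_rfl⟩,
      ⟨(hodd 0 (Nat.zero_le n)).1.1, fun p hp => ?_⟩,
      ⟨hsubO 0 (Nat.zero_le n), subset_rfl⟩,
      ⟨hsubO n le_rfl, subset_rfl⟩,
      ⟨(hodd n le_rfl).2.1, fun p hp => ?_⟩,
      ⟨m, (σo 0 (Nat.zero_le n), ⟨fm, hfm, hmemS⟩)⟩,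
      ⟨m, (σo n le_rfl, ⟨fm, hfm, hmemS⟩)⟩,
      ?_, ?_, ?_⟩
    · obtain ⟨i, -, rfl⟩ := Finset.mem_image.mp hp
      exact hme 0 (Nat.zero_le (n + 1)) i
    · obtain ⟨i, -, rfl⟩ := Finset.mem_image.mp hp
      exact hme (n + 1) le_rfl i
    · have hx0 : x 0 = ⟨m, (σe 0 (Nat.zero_le (n + 1)),
          ⟨fm, hfm, hme 0 (Nat.zero_le (n + 1))⟩)⟩ := hxe 0 (Nat.zero_le (n + 1))
      rw [hx0]
      exact gsimp_congr (rel1 0 (Nat.zero_le n))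
    · have hx2 : x (2 * n + 2) = ⟨m, (σe (n + 1) le_rfl,
          ⟨fm, hfm, hme (n + 1) le_rfl⟩)⟩ := hxe (n + 1) le_rfl
      rw [hx2]
      exact gsimp_congr (rel2 n le_rfl)
    · exact gsimp_congr (main n le_rfl)
end
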